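/- Let 0 < λ_1 ≤ … ≤ λ_n be the eigenvalues of A with corresponding orthonormal eigenvectors u_1, …, u_n, fix k ∈ {0,1,…,n−1} and τ ≥ 1. For α > 0 and β_1, …, β_k ≥ 0 define C := α·Tr(A) + Σ_{i=1}^k β_i, M(α,β) := (1/C)·(α·A + Σ_{i=1}^k β_i u_i u_iᵀ), and the mini-batch rate constant r(α,β,τ) := λ_min(M(α,β)) / (1/τ + (1 − 1/τ)·λ_max(M(α,β))). Then r(α,β,τ) ≤ λ_{k+1}/F_k, where F_k := (1/τ)·((k+1)λ_{k+1} + Σ_{i=k+2}^n λ_i) + (1 − 1/τ)·λ_n, and the bound is attained for α = 1 and β_i = λ_{k+1} − λ_i (i = 1,…,k). -/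

import Mathlib

open Matrix BigOperators Finset

/-- The matrix `M(α,β) = (1/C)(α A + Σ_{i<k} β_i u_i u_iᵀ)` with
`C = α Tr(A) + Σ_{i<k} β_i` (indices `0,…,k-1` are the `k` smallest). -/
noncomputable def Mssc {n : ℕ} (A : Matrix (Fin n) (Fin n) ℝ) (u : Fin n → Fin n → ℝ)
    (k : ℕ) (α : ℝ) (β : Fin n → ℝ) : Matrix (Fin n) (Fin n) ℝ :=
  (α * A.trace + ∑ i : Fin n, if (i : ℕ) < k then β i else 0)⁻¹ •
    (α • A + ∑ i : Fin n, if (i : ℕ) < k then β i • vecMulVec (u i) (u i) else 0)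

/-- `F_k = (1/τ)((k+1) λ_{k+1} + Σ_{i=k+2}^n λ_i) + (1 - 1/τ) λ_n`
(0-indexed: `λ_{k+1}` is `lam ⟨k, _⟩`). -/
noncomputable def Fssc {n : ℕ} (lam : Fin n → ℝ) (τ : ℕ) (k : ℕ) (hk : k < n) : ℝ :=
  (τ : ℝ)⁻¹ * (((k : ℝ) + 1) * lam ⟨k, hk⟩ +
      ∑ i : Fin n, if k + 1 ≤ (i : ℕ) then lam i else 0) +
    (1 - (τ : ℝ)⁻¹) * lam ⟨n - 1, by omega⟩

open Matrix BigOperators Finset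

namespace SSCDaux

variable {n : ℕ}

lemma sum_mulVec' (N : Fin n → Matrix (Fin n) (Fin n) ℝ) (x : Fin n → ℝ) :
    (∑ i, N i) *ᵥ x = ∑ i, (N i *ᵥ x) := by
  ext a
  simp only [Matrix.mulVec, dotProduct, Matrix.sum_apply, Finset.sum_apply, Finset.sum_mul]
  exact Finset.sum_comm

lemma dot_sum (x : Fin n → ℝ) (v : Fin n → Fin n → ℝ) :
    x ⬝ᵥ (∑ i, v i) = ∑ i, x ⬝ᵥ v i := by
  simp only [dotProduct, Finset.sum_apply, Finset.mul_sum]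
  exact Finset.sum_comm

lemma sum_vecMulVec_eq_one (u : Fin n → Fin n → ℝ)
    (h : ∀ i j, u i ⬝ᵥ u j = if i = j then (1 : ℝ) else 0) :
    ∑ i, vecMulVec (u i) (u i) = (1 : Matrix (Fin n) (Fin n) ℝ) := by
  have hUUt : (Matrix.of u) * (Matrix.of u)ᵀ = 1 := by
    ext i j
    simpa [Matrix.mul_apply, dotProduct, Matrix.one_apply] using h i j
  have hUtU : (Matrix.of u)ᵀ * (Matrix.of u) = 1 := mul_eq_one_comm.mp hUUt
  calc ∑ i, vecMulVec (u i) (u i) = (Matrix.of u)ᵀ * (Matrix.of u) := by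
        ext a b
        simp [Matrix.sum_apply, vecMulVec_apply, Matrix.mul_apply]
    _ = 1 := hUtU

lemma spectral_decomp (M : Matrix (Fin n) (Fin n) ℝ) (u : Fin n → Fin n → ℝ) (e : Fin n → ℝ)
    (h : ∀ i j, u i ⬝ᵥ u j = if i = j then (1 : ℝ) else 0)
    (heig : ∀ i, M *ᵥ u i = e i • u i) :
    M = ∑ i, e i • vecMulVec (u i) (u i) := by
  have h1 := sum_vecMulVec_eq_one u h
  calc M = M * ∑ i, vecMulVec (u i) (u i) := by rw [h1, Matrix.mul_one]
    _ = ∑ i, e i • vecMulVec (u i) (u i) := by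
        rw [Finset.mul_sum]
        refine Finset.sum_congr rfl fun i _ => ?_
        ext a b
        have := congrFun (heig i) a
        simp only [Matrix.mul_apply, vecMulVec_apply, Matrix.smul_apply, smul_eq_mul]
        simp only [Matrix.mulVec, dotProduct, Pi.smul_apply, smul_eq_mul] at this
        rw [show (∑ c, M a c * (u i c * u i b)) = (∑ c, M a c * u i c) * u i b by
          rw [Finset.sum_mul]; exact Finset.sum_congr rfl fun c _ => by ring]
        rw [this]; ring

lemma vecMulVec_mulVec (v x : Fin n → ℝ) : vecMulVec v v *ᵥ x = (v ⬝ᵥ x) • v := by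
  ext a
  simp only [Matrix.mulVec, dotProduct, vecMulVec_apply, Pi.smul_apply, smul_eq_mul,
    Finset.sum_mul, Finset.mul_sum]
  exact Finset.sum_congr rfl fun i _ => by ring

lemma quad_form (M : Matrix (Fin n) (Fin n) ℝ) (u : Fin n → Fin n → ℝ) (e : Fin n → ℝ)
    (h : ∀ i j, u i ⬝ᵥ u j = if i = j then (1 : ℝ) else 0)
    (heig : ∀ i, M *ᵥ u i = e i • u i) (x : Fin n → ℝ) :
    x ⬝ᵥ (M *ᵥ x) = ∑ i, e i * (u i ⬝ᵥ x) ^ 2 := by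
  rw [spectral_decomp M u e h heig]
  rw [show (∑ i, e i • vecMulVec (u i) (u i)) *ᵥ x = ∑ i, e i • ((u i ⬝ᵥ x) • u i) by
    rw [sum_mulVec']
    exact Finset.sum_congr rfl fun i _ => by rw [Matrix.smul_mulVec, vecMulVec_mulVec]]
  rw [dot_sum]
  refine Finset.sum_congr rfl fun i _ => ?_
  rw [dotProduct_smul, dotProduct_smul, smul_eq_mul, smul_eq_mul, dotProduct_comm]
  ring

lemma parseval (u : Fin n → Fin n → ℝ)
    (h : ∀ i j, u i ⬝ᵥ u j = if i = j then (1 : ℝ) else 0) (x : Fin n → ℝ) :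
    x ⬝ᵥ x = ∑ i, (u i ⬝ᵥ x) ^ 2 := by
  have h1 := sum_vecMulVec_eq_one u h
  have hx : x ⬝ᵥ ((1 : Matrix (Fin n) (Fin n) ℝ) *ᵥ x) = x ⬝ᵥ x := by rw [Matrix.one_mulVec]
  rw [← hx, ← h1]
  rw [show (∑ i, vecMulVec (u i) (u i)) *ᵥ x = ∑ i, (u i ⬝ᵥ x) • u i by
    rw [sum_mulVec']; exact Finset.sum_congr rfl fun i _ => vecMulVec_mulVec _ _]
  rw [dot_sum]
  exact Finset.sum_congr rfl fun i _ => by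
    rw [dotProduct_smul, smul_eq_mul, dotProduct_comm]; ring

end SSCDaux

namespace SSCDaux2
open SSCDaux

variable {n : ℕ} [NeZero n]

lemma sandwich_lower (M : Matrix (Fin n) (Fin n) ℝ) (u v : Fin n → Fin n → ℝ) (e f : Fin n → ℝ)
    (hu : ∀ i j, u i ⬝ᵥ u j = if i = j then (1 : ℝ) else 0)
    (hv : ∀ i j, v i ⬝ᵥ v j = if i = j then (1 : ℝ) else 0)
    (heu : ∀ i, M *ᵥ u i = e i • u i) (hev : ∀ i, M *ᵥ v i = f i • v i) (j : Fin n) :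
    (⨅ i, e i) ≤ f j := by
  have hone : v j ⬝ᵥ v j = 1 := by simpa using hv j j
  have hfj : f j = ∑ i, e i * (u i ⬝ᵥ v j) ^ 2 := by
    rw [← quad_form M u e hu heu (v j), hev j, dotProduct_smul, smul_eq_mul, hone, mul_one]
  have hpar : ∑ i, (u i ⬝ᵥ v j) ^ 2 = 1 := by rw [← parseval u hu (v j), hone]
  have hbdd : BddBelow (Set.range e) := (Set.finite_range e).bddBelow
  calc (⨅ i, e i) = ∑ i, (⨅ i, e i) * (u i ⬝ᵥ v j) ^ 2 := by
        rw [← Finset.mul_sum, hpar, mul_one]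
    _ ≤ ∑ i, e i * (u i ⬝ᵥ v j) ^ 2 :=
        Finset.sum_le_sum fun i _ =>
          mul_le_mul_of_nonneg_right (ciInf_le hbdd i) (sq_nonneg _)
    _ = f j := hfj.symm

lemma sandwich_upper (M : Matrix (Fin n) (Fin n) ℝ) (u v : Fin n → Fin n → ℝ) (e f : Fin n → ℝ)
    (hu : ∀ i j, u i ⬝ᵥ u j = if i = j then (1 : ℝ) else 0)
    (hv : ∀ i j, v i ⬝ᵥ v j = if i = j then (1 : ℝ) else 0)
    (heu : ∀ i, M *ᵥ u i = e i • u i) (hev : ∀ i, M *ᵥ v i = f i • v i) (j : Fin n) :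
    f j ≤ ⨆ i, e i := by
  have hone : v j ⬝ᵥ v j = 1 := by simpa using hv j j
  have hfj : f j = ∑ i, e i * (u i ⬝ᵥ v j) ^ 2 := by
    rw [← quad_form M u e hu heu (v j), hev j, dotProduct_smul, smul_eq_mul, hone, mul_one]
  have hpar : ∑ i, (u i ⬝ᵥ v j) ^ 2 = 1 := by rw [← parseval u hu (v j), hone]
  have hbdd : BddAbove (Set.range e) := (Set.finite_range e).bddAbove
  calc f j = ∑ i, e i * (u i ⬝ᵥ v j) ^ 2 := hfj
    _ ≤ ∑ i, (⨆ i, e i) * (u i ⬝ᵥ v j) ^ 2 :=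
        Finset.sum_le_sum fun i _ =>
          mul_le_mul_of_nonneg_right (le_ciSup hbdd i) (sq_nonneg _)
    _ = ⨆ i, e i := by rw [← Finset.mul_sum, hpar, mul_one]

lemma iInf_eigen_eq (M : Matrix (Fin n) (Fin n) ℝ) (u v : Fin n → Fin n → ℝ) (e f : Fin n → ℝ)
    (hu : ∀ i j, u i ⬝ᵥ u j = if i = j then (1 : ℝ) else 0)
    (hv : ∀ i j, v i ⬝ᵥ v j = if i = j then (1 : ℝ) else 0)
    (heu : ∀ i, M *ᵥ u i = e i • u i) (hev : ∀ i, M *ᵥ v i = f i • v i) :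
    (⨅ i, f i) = ⨅ i, e i :=
  le_antisymm (le_ciInf fun j => sandwich_lower M v u f e hv hu hev heu j)
    (le_ciInf fun j => sandwich_lower M u v e f hu hv heu hev j)

lemma iSup_eigen_eq (M : Matrix (Fin n) (Fin n) ℝ) (u v : Fin n → Fin n → ℝ) (e f : Fin n → ℝ)
    (hu : ∀ i j, u i ⬝ᵥ u j = if i = j then (1 : ℝ) else 0)
    (hv : ∀ i j, v i ⬝ᵥ v j = if i = j then (1 : ℝ) else 0)
    (heu : ∀ i, M *ᵥ u i = e i • u i) (hev : ∀ i, M *ᵥ v i = f i • v i) :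
    (⨆ i, f i) = ⨆ i, e i :=
  le_antisymm (ciSup_le fun j => sandwich_upper M u v e f hu hv heu hev j)
    (ciSup_le fun j => sandwich_upper M v u f e hv hu hev heu j)

lemma eigenvalues_dot_orthonormal (M : Matrix (Fin n) (Fin n) ℝ) (hM : M.IsHermitian) :
    ∀ i j, (⇑(hM.eigenvectorBasis i) : Fin n → ℝ) ⬝ᵥ ⇑(hM.eigenvectorBasis j) =
      if i = j then (1 : ℝ) else 0 := by
  intro i j
  have h := (orthonormal_iff_ite.mp hM.eigenvectorBasis.orthonormal) i j
  rw [dotProduct_comm]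
  simpa [PiLp.inner_apply, dotProduct, RCLike.inner_apply, conj_trivial] using h

lemma iInf_eigenvalues (M : Matrix (Fin n) (Fin n) ℝ) (hM : M.IsHermitian)
    (u : Fin n → Fin n → ℝ) (e : Fin n → ℝ)
    (hu : ∀ i j, u i ⬝ᵥ u j = if i = j then (1 : ℝ) else 0)
    (heu : ∀ i, M *ᵥ u i = e i • u i) :
    (⨅ i, hM.eigenvalues i) = ⨅ i, e i :=
  iInf_eigen_eq M u (fun i => ⇑(hM.eigenvectorBasis i)) e hM.eigenvalues hu
    (eigenvalues_dot_orthonormal M hM) heu (fun i => hM.mulVec_eigenvectorBasis i)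

lemma iSup_eigenvalues (M : Matrix (Fin n) (Fin n) ℝ) (hM : M.IsHermitian)
    (u : Fin n → Fin n → ℝ) (e : Fin n → ℝ)
    (hu : ∀ i j, u i ⬝ᵥ u j = if i = j then (1 : ℝ) else 0)
    (heu : ∀ i, M *ᵥ u i = e i • u i) :
    (⨆ i, hM.eigenvalues i) = ⨆ i, e i :=
  iSup_eigen_eq M u (fun i => ⇑(hM.eigenvectorBasis i)) e hM.eigenvalues hu
    (eigenvalues_dot_orthonormal M hM) heu (fun i => hM.mulVec_eigenvectorBasis i)

end SSCDaux2

namespace SSCDaux3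
open SSCDaux

variable {n : ℕ}

lemma trace_eq (A : Matrix (Fin n) (Fin n) ℝ) (u : Fin n → Fin n → ℝ) (lam : Fin n → ℝ)
    (horth : ∀ i j, u i ⬝ᵥ u j = if i = j then (1 : ℝ) else 0)
    (heig : ∀ i, A *ᵥ u i = lam i • u i) : A.trace = ∑ i, lam i := by
  rw [spectral_decomp A u lam horth heig, Matrix.trace_sum]
  refine Finset.sum_congr rfl fun i _ => ?_
  rw [Matrix.trace_smul, smul_eq_mul]
  have : (vecMulVec (u i) (u i)).trace = u i ⬝ᵥ u i := by
    simp [Matrix.trace, Matrix.diag, vecMulVec_apply, dotProduct]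
  rw [this, horth i i, if_pos rfl, mul_one]

lemma Mssc_mulVec (A : Matrix (Fin n) (Fin n) ℝ) (u : Fin n → Fin n → ℝ) (lam : Fin n → ℝ)
    (k : ℕ) (α : ℝ) (β : Fin n → ℝ)
    (horth : ∀ i j, u i ⬝ᵥ u j = if i = j then (1 : ℝ) else 0)
    (heig : ∀ i, A *ᵥ u i = lam i • u i) (j : Fin n) :
    Mssc A u k α β *ᵥ u j =
      ((α * A.trace + ∑ i : Fin n, if (i : ℕ) < k then β i else 0)⁻¹ *
        (α * lam j + if (j : ℕ) < k then β j else 0)) • u j := by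
  unfold Mssc
  rw [Matrix.smul_mulVec, Matrix.add_mulVec, Matrix.smul_mulVec, heig j,
    sum_mulVec']
  have hsum : (∑ i : Fin n, (if (i : ℕ) < k then β i • vecMulVec (u i) (u i) else 0) *ᵥ u j)
      = (if (j : ℕ) < k then β j else 0) • u j := by
    rw [Finset.sum_eq_single j]
    · split_ifs with h
      · rw [Matrix.smul_mulVec, vecMulVec_mulVec, horth j j, if_pos rfl, one_smul]
      · simp
    · intro i _ hij
      split_ifs with h
      · rw [Matrix.smul_mulVec, vecMulVec_mulVec, horth i j, if_neg hij]
        simp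
      · simp
    · simp
  rw [hsum]
  ext a
  simp only [Pi.smul_apply, Pi.add_apply, smul_eq_mul]
  ring

end SSCDaux3

theorem stmt13 {n : ℕ} (A : Matrix (Fin n) (Fin n) ℝ) (hA : A.PosDef)
    (lam : Fin n → ℝ) (u : Fin n → Fin n → ℝ)
    (hpos : ∀ i, 0 < lam i) (hmono : Monotone lam)
    (horth : ∀ i j, u i ⬝ᵥ u j = if i = j then (1 : ℝ) else 0)
    (heig : ∀ i, A *ᵥ u i = lam i • u i)
    (k : ℕ) (hk : k < n) (τ : ℕ) (hτ : 1 ≤ τ) :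
    (∀ α : ℝ, 0 < α → ∀ β : Fin n → ℝ, (∀ i : Fin n, (i : ℕ) < k → 0 ≤ β i) →
      ∀ hM : (Mssc A u k α β).IsHermitian,
        (⨅ i, hM.eigenvalues i) /
            ((τ : ℝ)⁻¹ + (1 - (τ : ℝ)⁻¹) * ⨆ i, hM.eigenvalues i) ≤
          lam ⟨k, hk⟩ / Fssc lam τ k hk) ∧
    (∀ hM : (Mssc A u k 1 (fun i => lam ⟨k, hk⟩ - lam i)).IsHermitian,
      (⨅ i, hM.eigenvalues i) /
          ((τ : ℝ)⁻¹ + (1 - (τ : ℝ)⁻¹) * ⨆ i, hM.eigenvalues i) =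
        lam ⟨k, hk⟩ / Fssc lam τ k hk) := by
  have hn : 0 < n := lt_of_le_of_lt (Nat.zero_le k) hk
  have hnz : NeZero n := ⟨by omega⟩
  set K : Fin n := ⟨k, hk⟩ with hKdef
  set N : Fin n := ⟨n - 1, by omega⟩ with hNdef
  have hKval : (K : ℕ) = k := rfl
  have hNval : (N : ℕ) = n - 1 := rfl
  have hc : 0 < lam K := hpos K
  have hKN : K ≤ N := by rw [hKdef, hNdef, Fin.le_def]; simp; omega
  have hcN : lam K ≤ lam N := hmono hKN
  have htr : A.trace = ∑ i, lam i := SSCDaux3.trace_eq A u lam horth heig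
  have hsumlam : 0 < ∑ i, lam i := Finset.sum_pos (fun i _ => hpos i) ⟨K, Finset.mem_univ K⟩
  have hτ0 : (0:ℝ) < (τ : ℝ)⁻¹ := by
    have : (0:ℝ) < (τ:ℝ) := by exact_mod_cast hτ
    positivity
  have hτ1 : (0:ℝ) ≤ 1 - (τ : ℝ)⁻¹ := by
    have h1 : (1:ℝ) ≤ (τ:ℝ) := by exact_mod_cast hτ
    have := inv_le_one_of_one_le₀ h1
    linarith
  have hTail0 : (0:ℝ) ≤ ∑ i : Fin n, if k + 1 ≤ (i : ℕ) then lam i else 0 :=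
    Finset.sum_nonneg fun i _ => by split_ifs; exacts [(hpos i).le, le_rfl]
  have hk1 : (0:ℝ) < (k:ℝ) + 1 := by positivity
  have hF : 0 < Fssc lam τ k hk := by
    unfold Fssc
    have h1 : (0:ℝ) < ((k:ℝ) + 1) * lam K + ∑ i : Fin n, if k + 1 ≤ (i : ℕ) then lam i else 0 := by
      nlinarith
    nlinarith [mul_nonneg hτ1 (hpos N).le]
  -- the function g
  set g : Fin n → ℝ := fun i => if (i : ℕ) ≤ k then lam K else lam i with hgdef
  have hg1 : ((k:ℝ) + 1) * lam K + (∑ i : Fin n, if k + 1 ≤ (i : ℕ) then lam i else 0)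
      = ∑ i, g i := by
    have hsplit : ∑ i, g i = (∑ i : Fin n, if (i : ℕ) ≤ k then lam K else 0)
        + ∑ i : Fin n, if k + 1 ≤ (i : ℕ) then lam i else 0 := by
      rw [← Finset.sum_add_distrib]
      refine Finset.sum_congr rfl fun i _ => ?_
      simp only [hgdef]
      by_cases h : (i : ℕ) ≤ k
      · rw [if_pos h, if_pos h, if_neg (by omega)]; ring
      · rw [if_neg h, if_neg h, if_pos (by omega)]; ring
    have hcount : (∑ i : Fin n, if (i : ℕ) ≤ k then lam K else 0) = ((k:ℝ) + 1) * lam K := by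
      rw [Fin.sum_univ_eq_sum_range (fun i => if i ≤ k then lam K else 0) n]
      rw [← Finset.sum_subset (Finset.range_subset_range.mpr (show k + 1 ≤ n by omega))
        (fun x _ hx => by rw [if_neg (by simp at hx; omega)])]
      rw [Finset.sum_congr rfl (fun x hx => if_pos (by simp at hx; omega))]
      rw [Finset.sum_const, Finset.card_range, nsmul_eq_mul]
      push_cast; ring
    rw [hsplit, hcount]
  have hglow : ∀ i, lam K ≤ g i := by
    intro i
    simp only [hgdef]
    split_ifs with h
    · exact le_rfl
    · exact hmono (by rw [Fin.le_def]; simp; omega)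
  have hghigh : ∀ i, g i ≤ lam N := by
    intro i
    simp only [hgdef]
    split_ifs with h
    · exact hcN
    · exact hmono (by rw [Fin.le_def]; simp; omega)
  constructor
  · -- inequality part
    intro α hα β hβ hM
    set C : ℝ := α * A.trace + ∑ i : Fin n, if (i : ℕ) < k then β i else 0 with hCdef
    have hβsum : (0:ℝ) ≤ ∑ i : Fin n, if (i : ℕ) < k then β i else 0 :=
      Finset.sum_nonneg fun i _ => by split_ifs with h; exacts [hβ i h, le_rfl]
    have hCpos : 0 < C := by
      rw [hCdef, htr]
      exact add_pos_of_pos_of_nonneg (mul_pos hα hsumlam) hβsum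
    set μ : Fin n → ℝ := fun i => C⁻¹ * (α * lam i + if (i : ℕ) < k then β i else 0) with hμdef
    have hMu : ∀ j, Mssc A u k α β *ᵥ u j = μ j • u j := fun j =>
      SSCDaux3.Mssc_mulVec A u lam k α β horth heig j
    rw [SSCDaux2.iInf_eigenvalues _ hM u μ horth hMu,
      SSCDaux2.iSup_eigenvalues _ hM u μ horth hMu]
    have hbddB : BddBelow (Set.range μ) := (Set.finite_range μ).bddBelow
    have hbddA : BddAbove (Set.range μ) := (Set.finite_range μ).bddAbove
    have hmle : ∀ i, (⨅ i, μ i) ≤ μ i := fun i => ciInf_le hbddB i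
    have hSge : μ N ≤ ⨆ i, μ i := le_ciSup hbddA N
    have hμK : μ K = C⁻¹ * (α * lam K) := by
      simp only [hμdef]
      rw [if_neg (by simp [hKdef])]
      ring
    have hμN : μ N = C⁻¹ * (α * lam N) := by
      simp only [hμdef]
      rw [if_neg (by simp [hNdef]; omega)]
      ring
    have hμNpos : 0 < μ N := by
      rw [hμN]
      exact mul_pos (inv_pos.mpr hCpos) (mul_pos hα (hpos N))
    have hD : 0 < (τ : ℝ)⁻¹ + (1 - (τ : ℝ)⁻¹) * ⨆ i, μ i :=
      add_pos_of_pos_of_nonneg hτ0 (mul_nonneg hτ1 (le_trans hμNpos.le hSge))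
    have hsumμ : ∑ i, μ i = 1 := by
      simp only [hμdef]
      rw [← Finset.mul_sum, Finset.sum_add_distrib, ← Finset.mul_sum, ← htr]
      exact inv_mul_cancel₀ hCpos.ne'
    rw [div_le_div_iff₀ hD hF]
    set m : ℝ := ⨅ i, μ i with hmdef
    set S : ℝ := ⨆ i, μ i with hSdef
    have hB : m * lam N ≤ lam K * S := by
      have h1 : m * lam N ≤ μ K * lam N := mul_le_mul_of_nonneg_right (hmle K) (hpos N).le
      have h2 : μ K * lam N = lam K * μ N := by rw [hμK, hμN]; ring
      have h3 : lam K * μ N ≤ lam K * S := mul_le_mul_of_nonneg_left hSge hc.le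
      linarith
    have hApre : m * (∑ i, g i) ≤ lam K := by
      have hlamK : lam K = ∑ i, lam K * μ i := by rw [← Finset.mul_sum, hsumμ, mul_one]
      rw [hlamK, Finset.mul_sum]
      refine Finset.sum_le_sum fun i _ => ?_
      by_cases hik : (i : ℕ) ≤ k
      · rw [show g i = lam K by simp only [hgdef]; rw [if_pos hik]]
        calc m * lam K ≤ μ i * lam K := mul_le_mul_of_nonneg_right (hmle i) hc.le
          _ = lam K * μ i := mul_comm _ _
      · rw [show g i = lam i by simp only [hgdef]; rw [if_neg hik]]
        have hμi : μ i = C⁻¹ * (α * lam i) := by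
          simp only [hμdef]; rw [if_neg (by omega)]; ring
        have h1 : m * lam i ≤ C⁻¹ * (α * lam K) * lam i := by
          have := hmle K
          rw [hμK] at this
          exact mul_le_mul_of_nonneg_right this (hpos i).le
        calc m * lam i ≤ C⁻¹ * (α * lam K) * lam i := h1
          _ = lam K * μ i := by rw [hμi]; ring
    have hA' : m * (((k:ℝ) + 1) * lam K +
        (∑ i : Fin n, if k + 1 ≤ (i : ℕ) then lam i else 0)) ≤ lam K := by
      rw [hg1]; exact hApre
    calc m * Fssc lam τ k hk
        = (τ : ℝ)⁻¹ * (m * (((k:ℝ) + 1) * lam K +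
            (∑ i : Fin n, if k + 1 ≤ (i : ℕ) then lam i else 0)))
          + (1 - (τ : ℝ)⁻¹) * (m * lam N) := by
          unfold Fssc; ring
      _ ≤ (τ : ℝ)⁻¹ * lam K + (1 - (τ : ℝ)⁻¹) * (lam K * S) :=
          add_le_add (mul_le_mul_of_nonneg_left hA' hτ0.le)
            (mul_le_mul_of_nonneg_left hB hτ1)
      _ = lam K * ((τ : ℝ)⁻¹ + (1 - (τ : ℝ)⁻¹) * S) := by ring
  · -- equality part
    intro hM
    set β : Fin n → ℝ := fun i => lam K - lam i with hβdef
    set C : ℝ := 1 * A.trace + ∑ i : Fin n, if (i : ℕ) < k then β i else 0 with hCdef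
    set T : ℝ := ((k:ℝ) + 1) * lam K +
      (∑ i : Fin n, if k + 1 ≤ (i : ℕ) then lam i else 0) with hTdef
    have hCT : C = T := by
      rw [hg1, hCdef, htr, one_mul, ← Finset.sum_add_distrib]
      refine Finset.sum_congr rfl fun i _ => ?_
      simp only [hgdef, hβdef]
      by_cases h1 : (i : ℕ) < k
      · rw [if_pos h1, if_pos (by omega)]; ring
      · rw [if_neg h1]
        by_cases h2 : (i : ℕ) ≤ k
        · rw [if_pos h2]
          have : i = K := Fin.ext (by rw [hKval]; omega)
          rw [this]; ring
        · rw [if_neg h2]; ring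
    have hTpos : 0 < T := by
      rw [hTdef]; nlinarith
    set μ : Fin n → ℝ := fun i => C⁻¹ * (1 * lam i + if (i : ℕ) < k then β i else 0) with hμdef
    have hMu : ∀ j, Mssc A u k 1 β *ᵥ u j = μ j • u j := fun j =>
      SSCDaux3.Mssc_mulVec A u lam k 1 β horth heig j
    rw [SSCDaux2.iInf_eigenvalues _ hM u μ horth hMu,
      SSCDaux2.iSup_eigenvalues _ hM u μ horth hMu]
    have hμg : ∀ i, μ i = T⁻¹ * g i := by
      intro i
      simp only [hμdef, hgdef, hβdef, hCT]
      by_cases h1 : (i : ℕ) < k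
      · rw [if_pos h1, if_pos (by omega)]; ring
      · rw [if_neg h1]
        by_cases h2 : (i : ℕ) ≤ k
        · rw [if_pos h2]
          have : i = K := Fin.ext (by rw [hKval]; omega)
          rw [this]; ring
        · rw [if_neg h2]; ring
    have hgK : g K = lam K := by simp only [hgdef]; rw [if_pos (by simp [hKdef])]
    have hgN : g N = lam N := by
      simp only [hgdef]
      split_ifs with h
      · have : N = K := Fin.ext (by rw [hKval, hNval]; omega)
        rw [this]
      · rfl
    have hbddB : BddBelow (Set.range μ) := (Set.finite_range μ).bddBelow
    have hbddA : BddAbove (Set.range μ) := (Set.finite_range μ).bddAbove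
    have hTinv : (0:ℝ) ≤ T⁻¹ := by positivity
    have hinf : (⨅ i, μ i) = T⁻¹ * lam K := by
      refine le_antisymm ?_ (le_ciInf fun i => ?_)
      · have := ciInf_le hbddB K
        rwa [hμg K, hgK] at this
      · rw [hμg i]
        exact mul_le_mul_of_nonneg_left (hglow i) hTinv
    have hsup : (⨆ i, μ i) = T⁻¹ * lam N := by
      refine le_antisymm (ciSup_le fun i => ?_) ?_
      · rw [hμg i]
        exact mul_le_mul_of_nonneg_left (hghigh i) hTinv
      · have := le_ciSup hbddA N
        rwa [hμg N, hgN] at this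
    rw [hinf, hsup]
    have hD' : 0 < (τ : ℝ)⁻¹ + (1 - (τ : ℝ)⁻¹) * (T⁻¹ * lam N) :=
      add_pos_of_pos_of_nonneg hτ0
        (mul_nonneg hτ1 (mul_nonneg hTinv (hpos N).le))
    rw [div_eq_div_iff hD'.ne' hF.ne']
    have hFssc : Fssc lam τ k hk = (τ : ℝ)⁻¹ * T + (1 - (τ : ℝ)⁻¹) * lam N := by
      unfold Fssc; rw [hTdef]
    rw [hFssc]
    have hTT : T⁻¹ * T = 1 := inv_mul_cancel₀ hTpos.ne'
    linear_combination (lam K * (τ : ℝ)⁻¹) * hTT
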